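/- arXiv:0711.2527 — 6 statements merged into one kernel-verified Lean document; each statement's English description precedes it below -/
import Mathlib

section
/- Let A be a k-vector space with a bilinear product such that the commutator [x,y] = xy − yx satisfies, for every associative unital test k-algebra R, the Jacobi identity on A ⊗ R (with product (a⊗r)(b⊗s) = (ab)⊗(rs)). Then the product on A is associative. -/
open TensorProduct

/-- The induced product on `A ⊗[k] R`: `(a ⊗ r) * (b ⊗ s) = (a·b) ⊗ (r*s)`. -/
noncomputable def tensorMul (k : Type*) [Field k] {A : Type*} [AddCommGroup A] [Module k A]
    (mul : A →ₗ[k] A →ₗ[k] A) (R : Type*) [Ring R] [Algebra k R]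
    (x y : A ⊗[k] R) : A ⊗[k] R :=
  TensorProduct.map (TensorProduct.lift mul) (LinearMap.mul' k R)
    (TensorProduct.tensorTensorTensorComm k A R A R (x ⊗ₜ y))

lemma tensorMul_tmul (k : Type) [Field k] {A : Type} [AddCommGroup A] [Module k A]
    (mul : A →ₗ[k] A →ₗ[k] A) (R : Type) [Ring R] [Algebra k R]
    (a b : A) (r s : R) :
    tensorMul k mul R (a ⊗ₜ r) (b ⊗ₜ s) = mul a b ⊗ₜ (r * s) := by
  simp [tensorMul]

lemma tensorMul_sub_left (k : Type) [Field k] {A : Type} [AddCommGroup A] [Module k A]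
    (mul : A →ₗ[k] A →ₗ[k] A) (R : Type) [Ring R] [Algebra k R]
    (x y z : A ⊗[k] R) :
    tensorMul k mul R (x - y) z = tensorMul k mul R x z - tensorMul k mul R y z := by
  simp [tensorMul, TensorProduct.sub_tmul]

lemma tensorMul_sub_right (k : Type) [Field k] {A : Type} [AddCommGroup A] [Module k A]
    (mul : A →ₗ[k] A →ₗ[k] A) (R : Type) [Ring R] [Algebra k R]
    (x y z : A ⊗[k] R) :
    tensorMul k mul R x (y - z) = tensorMul k mul R x y - tensorMul k mul R x z := by
  simp [tensorMul, TensorProduct.tmul_sub]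

/-- If for every associative unital test `k`-algebra `R` the commutator
bracket of the induced product on `A ⊗[k] R` is alternating and satisfies the Jacobi
identity, then the product on `A` is associative. -/
theorem stmt1 (k : Type) [Field k] [CharZero k] (A : Type) [AddCommGroup A] [Module k A]
    (mul : A →ₗ[k] A →ₗ[k] A)
    (h : ∀ (R : Type) [Ring R] [Algebra k R],
        (∀ x : A ⊗[k] R, tensorMul k mul R x x - tensorMul k mul R x x = 0) ∧
        (∀ x y z : A ⊗[k] R,
          (tensorMul k mul R (tensorMul k mul R x y - tensorMul k mul R y x) z -
            tensorMul k mul R z (tensorMul k mul R x y - tensorMul k mul R y x)) +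
          (tensorMul k mul R (tensorMul k mul R y z - tensorMul k mul R z y) x -
            tensorMul k mul R x (tensorMul k mul R y z - tensorMul k mul R z y)) +
          (tensorMul k mul R (tensorMul k mul R z x - tensorMul k mul R x z) y -
            tensorMul k mul R y (tensorMul k mul R z x - tensorMul k mul R x z)) = 0)) :
    ∀ a b c : A, mul (mul a b) c = mul a (mul b c) := by
  intro a b c
  classical
  let R := MonoidAlgebra k (FreeMonoid (Fin 3))
  obtain ⟨-, hj⟩ := h (MonoidAlgebra k (FreeMonoid (Fin 3)))
  have key := hj (a ⊗ₜ MonoidAlgebra.single (FreeMonoid.of 0) 1)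
    (b ⊗ₜ MonoidAlgebra.single (FreeMonoid.of 1) 1)
    (c ⊗ₜ MonoidAlgebra.single (FreeMonoid.of 2) 1)
  simp only [tensorMul_tmul, tensorMul_sub_left, tensorMul_sub_right,
    MonoidAlgebra.single_mul_single, one_mul] at key
  have key2 := congrArg ((TensorProduct.rid k A).toLinearMap.comp
    (LinearMap.lTensor A (Finsupp.lapply (R := k)
      (FreeMonoid.of 0 * FreeMonoid.of 1 * FreeMonoid.of 2) ∘ₗ
      (MonoidAlgebra.coeffLinearEquiv k).toLinearMap))) key
  simp only [map_add, map_sub, map_zero, LinearMap.comp_apply, LinearMap.lTensor_tmul,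
    LinearEquiv.coe_coe, TensorProduct.rid_tmul, Finsupp.lapply_apply,
    MonoidAlgebra.coeffLinearEquiv_apply, MonoidAlgebra.single_apply] at key2
  have hn0 : ((FreeMonoid.of 1 * FreeMonoid.of 0 * FreeMonoid.of 2 : FreeMonoid (Fin 3)) =
      FreeMonoid.of 0 * FreeMonoid.of 1 * FreeMonoid.of 2) = False := by
    simp only [eq_iff_iff, iff_false]
    intro hc
    have h2 := congrArg FreeMonoid.toList hc
    simp only [FreeMonoid.toList_mul, FreeMonoid.toList_of] at h2
    simp at h2
  have hn1 : ((FreeMonoid.of 2 * (FreeMonoid.of 0 * FreeMonoid.of 1) : FreeMonoid (Fin 3)) =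
      FreeMonoid.of 0 * FreeMonoid.of 1 * FreeMonoid.of 2) = False := by
    simp only [eq_iff_iff, iff_false]
    intro hc
    have h2 := congrArg FreeMonoid.toList hc
    simp only [FreeMonoid.toList_mul, FreeMonoid.toList_of] at h2
    simp at h2
  have hn2 : ((FreeMonoid.of 2 * (FreeMonoid.of 1 * FreeMonoid.of 0) : FreeMonoid (Fin 3)) =
      FreeMonoid.of 0 * FreeMonoid.of 1 * FreeMonoid.of 2) = False := by
    simp only [eq_iff_iff, iff_false]
    intro hc
    have h2 := congrArg FreeMonoid.toList hc
    simp only [FreeMonoid.toList_mul, FreeMonoid.toList_of] at h2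
    simp at h2
  have hn3 : ((FreeMonoid.of 1 * FreeMonoid.of 2 * FreeMonoid.of 0 : FreeMonoid (Fin 3)) =
      FreeMonoid.of 0 * FreeMonoid.of 1 * FreeMonoid.of 2) = False := by
    simp only [eq_iff_iff, iff_false]
    intro hc
    have h2 := congrArg FreeMonoid.toList hc
    simp only [FreeMonoid.toList_mul, FreeMonoid.toList_of] at h2
    simp at h2
  have hn4 : ((FreeMonoid.of 2 * FreeMonoid.of 1 * FreeMonoid.of 0 : FreeMonoid (Fin 3)) =
      FreeMonoid.of 0 * FreeMonoid.of 1 * FreeMonoid.of 2) = False := by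
    simp only [eq_iff_iff, iff_false]
    intro hc
    have h2 := congrArg FreeMonoid.toList hc
    simp only [FreeMonoid.toList_mul, FreeMonoid.toList_of] at h2
    simp at h2
  have hn5 : ((FreeMonoid.of 0 * (FreeMonoid.of 2 * FreeMonoid.of 1) : FreeMonoid (Fin 3)) =
      FreeMonoid.of 0 * FreeMonoid.of 1 * FreeMonoid.of 2) = False := by
    simp only [eq_iff_iff, iff_false]
    intro hc
    have h2 := congrArg FreeMonoid.toList hc
    simp only [FreeMonoid.toList_mul, FreeMonoid.toList_of] at h2
    simp at h2
  have hn6 : ((FreeMonoid.of 2 * FreeMonoid.of 0 * FreeMonoid.of 1 : FreeMonoid (Fin 3)) =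
      FreeMonoid.of 0 * FreeMonoid.of 1 * FreeMonoid.of 2) = False := by
    simp only [eq_iff_iff, iff_false]
    intro hc
    have h2 := congrArg FreeMonoid.toList hc
    simp only [FreeMonoid.toList_mul, FreeMonoid.toList_of] at h2
    simp at h2
  have hn7 : ((FreeMonoid.of 0 * FreeMonoid.of 2 * FreeMonoid.of 1 : FreeMonoid (Fin 3)) =
      FreeMonoid.of 0 * FreeMonoid.of 1 * FreeMonoid.of 2) = False := by
    simp only [eq_iff_iff, iff_false]
    intro hc
    have h2 := congrArg FreeMonoid.toList hc
    simp only [FreeMonoid.toList_mul, FreeMonoid.toList_of] at h2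
    simp at h2
  have hn8 : ((FreeMonoid.of 1 * (FreeMonoid.of 2 * FreeMonoid.of 0) : FreeMonoid (Fin 3)) =
      FreeMonoid.of 0 * FreeMonoid.of 1 * FreeMonoid.of 2) = False := by
    simp only [eq_iff_iff, iff_false]
    intro hc
    have h2 := congrArg FreeMonoid.toList hc
    simp only [FreeMonoid.toList_mul, FreeMonoid.toList_of] at h2
    simp at h2
  have hn9 : ((FreeMonoid.of 1 * (FreeMonoid.of 0 * FreeMonoid.of 2) : FreeMonoid (Fin 3)) =
      FreeMonoid.of 0 * FreeMonoid.of 1 * FreeMonoid.of 2) = False := by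
    simp only [eq_iff_iff, iff_false]
    intro hc
    have h2 := congrArg FreeMonoid.toList hc
    simp only [FreeMonoid.toList_mul, FreeMonoid.toList_of] at h2
    simp at h2
  have hp : ((FreeMonoid.of 0 * (FreeMonoid.of 1 * FreeMonoid.of 2) : FreeMonoid (Fin 3)) =
      FreeMonoid.of 0 * FreeMonoid.of 1 * FreeMonoid.of 2) = True :=
    eq_true (mul_assoc _ _ _).symm
  simp only [hn0, hn1, hn2, hn3, hn4, hn5, hn6, hn7, hn8, hn9, hp, if_true, if_false, one_smul, zero_smul,
    sub_zero, zero_sub, zero_add, add_zero, sub_neg_eq_add, neg_add_eq_sub] at key2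
  rw [add_neg_eq_zero] at key2
  exact key2
end

section
/- Let k be a field and let B and V be topological vector spaces over k whose topologies are linear, complete, and separated, and suppose the topology of B admits a countable base of open subspaces. Then every continuous open linear surjection B → V admits a continuous linear section. -/
open Filter

/-- Let `B` and `V` be complete separated linearly topologized vector
spaces over a field `k`, and suppose the topology of `B` admits a countable decreasing
base of open subspaces at `0`.  Then every continuous open linear surjection `f : B → V`
admits a continuous linear section; in particular every short exact sequence
`0 → A → B → V → 0` of such spaces splits. -/
theorem stmt3 (k : Type*) [Field k]
    (B V : Type*) [AddCommGroup B] [Module k B] [AddCommGroup V] [Module k V]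
    [UniformSpace B] [IsUniformAddGroup B] [UniformSpace V] [IsUniformAddGroup V]
    [ContinuousConstSMul k B] [ContinuousConstSMul k V]
    [CompleteSpace B] [T2Space B] [CompleteSpace V] [T2Space V]
    -- linear topologies
    (hBlin : ∀ U ∈ nhds (0 : B), ∃ W : Submodule k B, IsOpen (W : Set B) ∧ (W : Set B) ⊆ U)
    (hVlin : ∀ U ∈ nhds (0 : V), ∃ W : Submodule k V, IsOpen (W : Set V) ∧ (W : Set V) ⊆ U)
    -- countable base of open subspaces for B
    (P : ℕ → Submodule k B) (hPopen : ∀ n, IsOpen ((P n : Set B)))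
    (hPanti : ∀ n, P (n + 1) ≤ P n)
    (hPbase : ∀ U ∈ nhds (0 : B), ∃ n, (P n : Set B) ⊆ U)
    (f : B →ₗ[k] V) (hfc : Continuous f) (hfo : IsOpenMap f)
    (hfs : Function.Surjective f) :
    ∃ g : V →ₗ[k] B, Continuous g ∧ f.comp g = LinearMap.id := by
  classical
  -- the filtration on B, starting at ⊤
  set Q : ℕ → Submodule k B := fun n => Nat.casesOn n ⊤ P with hQdef
  have hQ0 : Q 0 = ⊤ := rfl
  have hQs : ∀ n, Q (n + 1) = P n := fun n => rfl
  have hQopen : ∀ n, IsOpen ((Q n : Set B)) := by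
    intro n; cases n with
    | zero => simp only [hQ0, Submodule.top_coe]; exact isOpen_univ
    | succ m => simpa [hQs] using hPopen m
  have hQanti : ∀ n, Q (n + 1) ≤ Q n := by
    intro n; cases n with
    | zero => exact le_top
    | succ m => exact hPanti m
  have hQmono : ∀ {m n : ℕ}, m ≤ n → Q n ≤ Q m :=
    fun {m n} h => antitone_nat_of_succ_le hQanti h
  have hQbase : ∀ U ∈ nhds (0 : B), ∃ n, (Q n : Set B) ⊆ U := by
    intro U hU
    obtain ⟨n, hn⟩ := hPbase U hU
    exact ⟨n + 1, by rw [hQs]; exact hn⟩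
  -- the image filtration on V
  set W : ℕ → Submodule k V := fun n => (Q n).map f with hWdef
  have hW0 : W 0 = ⊤ := by
    rw [hWdef]; simp only [hQ0, Submodule.map_top]
    exact LinearMap.range_eq_top.mpr hfs
  have hWopen : ∀ n, IsOpen ((W n : Set V)) := by
    intro n
    have : (W n : Set V) = f '' (Q n : Set B) := rfl
    rw [this]; exact hfo _ (hQopen n)
  have hWanti : ∀ n, W (n + 1) ≤ W n := fun n => Submodule.map_mono (hQanti n)
  have hWmono : ∀ {m n : ℕ}, m ≤ n → W n ≤ W m :=
    fun {m n} h => antitone_nat_of_succ_le hWanti h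
  have hWnhds : ∀ n, (W n : Set V) ∈ nhds (0 : V) :=
    fun n => (hWopen n).mem_nhds (Submodule.zero_mem _)
  have hWbase : ∀ U ∈ nhds (0 : V), ∃ n, (W n : Set V) ⊆ U := by
    intro U hU
    have h0 : f 0 = 0 := map_zero f
    have hpre : f ⁻¹' U ∈ nhds (0 : B) := by
      have := hfc.continuousAt (x := (0 : B)) (by rw [h0]; exact hU)
      exact this
    obtain ⟨n, hn⟩ := hQbase _ hpre
    refine ⟨n, ?_⟩
    rintro v ⟨b, hb, rfl⟩
    exact hn hb
  -- restricted surjections Q n → W n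
  set fres : ∀ n, ↥(Q n) →ₗ[k] ↥(W n) :=
    fun n => f.restrict (fun x hx => Submodule.mem_map_of_mem hx) with hfres
  have hfres_surj : ∀ n, Function.Surjective (fres n) := by
    rintro n ⟨w, hw⟩
    obtain ⟨b, hb, rfl⟩ := hw
    exact ⟨⟨b, hb⟩, rfl⟩
  -- linear sections of the restricted maps, via projectivity of vector spaces
  have hsec : ∀ n, ∃ s : ↥(W n) →ₗ[k] ↥(Q n), (fres n).comp s = LinearMap.id :=
    fun n => Module.projective_lifting_property (fres n) LinearMap.id (hfres_surj n)
  choose s hs using hsec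
  have hs_apply : ∀ n (x : ↥(W n)), f ((s n x : B)) = (x : V) := by
    intro n x
    have h := LinearMap.ext_iff.mp (hs n) x
    have h2 := congrArg Subtype.val h
    simpa [hfres, LinearMap.restrict_coe_apply] using h2
  -- complements of W (n+1) inside W n, and the corresponding projections
  have hcompl : ∀ n, ∃ C : Submodule k ↥(W n),
      IsCompl ((W (n + 1)).comap (W n).subtype) C :=
    fun n => Submodule.exists_isCompl _
  choose C hC using hcompl
  set ρ : ∀ n, ↥(W n) →ₗ[k] ↥(W (n + 1)) := fun n =>
    (Submodule.comapSubtypeEquivOfLe (hWanti n)).toLinearMap.comp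
      (Submodule.linearProjOfIsCompl _ (C n) (hC n)) with hρdef
  have hρ_mem : ∀ n (x : ↥(W n)), (x : V) ∈ W (n + 1) → ((ρ n x : ↥(W (n+1))) : V) = (x : V) := by
    intro n x hx
    have hx' : x ∈ (W (n + 1)).comap (W n).subtype := hx
    have := Submodule.linearProjOfIsCompl_apply_left (hC n) (⟨x, hx'⟩ : ↥((W (n + 1)).comap (W n).subtype))
    simp only [hρdef, LinearMap.comp_apply, LinearEquiv.coe_coe]
    rw [show ((⟨x, hx'⟩ : ↥((W (n + 1)).comap (W n).subtype)) : ↥(W n)) = x from rfl] at this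
    rw [show Submodule.linearProjOfIsCompl _ (C n) (hC n) x = ⟨x, hx'⟩ from this, Submodule.comapSubtypeEquivOfLe_apply_coe]
  -- the remainders r n : V → W n
  set r : ∀ n, V →ₗ[k] ↥(W n) := fun n => Nat.rec
    (LinearMap.codRestrict (W 0) LinearMap.id (fun v => by rw [hW0]; trivial))
    (fun m rm => (ρ m).comp rm) n with hrdef
  have hr0 : ∀ v, ((r 0 v : ↥(W 0)) : V) = v := fun v => rfl
  have hrs : ∀ n, r (n + 1) = (ρ n).comp (r n) := fun n => rfl
  -- the components c n : V → W n
  set c : ∀ n, V →ₗ[k] ↥(W n) := fun n =>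
    r n - (Submodule.inclusion (hWanti n)).comp (r (n + 1)) with hcdef
  have hc_apply : ∀ n v, ((c n v : ↥(W n)) : V) = ((r n v : ↥(W n)) : V) - ((r (n+1) v : ↥(W (n+1))) : V) := by
    intro n v; rfl
  -- the lifted components u n : V → B
  set u : ∀ n, V →ₗ[k] B := fun n => (Q n).subtype.comp ((s n).comp (c n)) with hudef
  have hu_mem : ∀ n v, u n v ∈ Q n := fun n v => (s n (c n v)).2
  have hfu : ∀ n v, f (u n v) = ((c n v : ↥(W n)) : V) := fun n v => hs_apply n (c n v)
  -- telescoping partial sums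
  have htel : ∀ (v : V) (N : ℕ),
      ∑ n ∈ Finset.range N, ((c n v : ↥(W n)) : V) = v - ((r N v : ↥(W N)) : V) := by
    intro v N
    induction N with
    | zero => simp [hr0 v]
    | succ m ih =>
        rw [Finset.sum_range_succ, ih, hc_apply]
        abel
  -- if v ∈ W N then r n v = v for all n ≤ N, hence c n v = 0 for n < N
  have hr_eq : ∀ (N : ℕ) (v : V), v ∈ W N → ∀ n ≤ N, ((r n v : ↥(W n)) : V) = v := by
    intro N v hv n hn
    induction n with
    | zero => exact hr0 v
    | succ m ih =>
        have hm : ((r m v : ↥(W m)) : V) = v := ih (le_trans (Nat.le_succ m) hn)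
        have hvm : ((r m v : ↥(W m)) : V) ∈ W (m + 1) := by
          rw [hm]; exact hWmono hn hv
        rw [hrs]
        have := hρ_mem m (r m v) hvm
        simpa [hm] using this
  have hc_zero : ∀ (N : ℕ) (v : V), v ∈ W N → ∀ n < N, c n v = 0 := by
    intro N v hv n hn
    have h1 : ((r n v : ↥(W n)) : V) = v := hr_eq N v hv n (le_of_lt hn)
    have h2 : ((r (n+1) v : ↥(W (n+1))) : V) = v := hr_eq N v hv (n+1) hn
    have : ((c n v : ↥(W n)) : V) = 0 := by rw [hc_apply, h1, h2, sub_self]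
    exact Subtype.ext this
  have hu_zero : ∀ (N : ℕ) (v : V), v ∈ W N → ∀ n < N, u n v = 0 := by
    intro N v hv n hn
    have : u n v = (Q n).subtype (s n (c n v)) := rfl
    rw [this, hc_zero N v hv n hn]
    simp
  -- summability
  have hsum : ∀ v : V, Summable (fun n => u n v) := by
    intro v
    rw [summable_iff_vanishing]
    intro e he
    obtain ⟨N, hN⟩ := hQbase e he
    refine ⟨Finset.range N, fun t ht => ?_⟩
    apply hN
    refine Submodule.sum_mem _ (fun n hn => ?_)
    have hnN : N ≤ n := by
      by_contra hlt
      exact (Finset.disjoint_left.mp ht hn) (Finset.mem_range.mpr (Nat.lt_of_not_le hlt))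
    exact hQmono hnN (hu_mem n v)
  -- partial sums tend to the tsum
  have htend : ∀ v : V, Tendsto (fun N => ∑ n ∈ Finset.range N, u n v) atTop
      (nhds (∑' n, u n v)) := fun v => (hsum v).hasSum.tendsto_sum_nat
  -- remainders tend to 0
  have hrtend : ∀ v : V, Tendsto (fun N => ((r N v : ↥(W N)) : V)) atTop (nhds 0) := by
    intro v
    rw [Filter.tendsto_atTop']
    intro U hU
    obtain ⟨n, hn⟩ := hWbase U hU
    exact ⟨n, fun N hN => hn (hWmono hN (r N v).2)⟩
  -- f ∘ (tsum) = id
  have hfg : ∀ v : V, f (∑' n, u n v) = v := by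
    intro v
    have h1 : Tendsto (fun N => f (∑ n ∈ Finset.range N, u n v)) atTop
        (nhds (f (∑' n, u n v))) := (hfc.tendsto _).comp (htend v)
    have h2 : (fun N => f (∑ n ∈ Finset.range N, u n v)) =
        fun N => v - ((r N v : ↥(W N)) : V) := by
      funext N
      rw [map_sum]
      simp only [hfu]
      exact htel v N
    rw [h2] at h1
    have h3 : Tendsto (fun N => v - ((r N v : ↥(W N)) : V)) atTop (nhds (v - 0)) :=
      tendsto_const_nhds.sub (hrtend v)
    rw [sub_zero] at h3
    exact tendsto_nhds_unique h1 h3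
  -- membership of the tsum
  have hQclosed : ∀ n, IsClosed ((Q n : Set B)) := fun n =>
    AddSubgroup.isClosed_of_isOpen (Q n).toAddSubgroup (hQopen n)
  have hg_mem : ∀ (N : ℕ) (v : V), v ∈ W N → (∑' n, u n v) ∈ Q N := by
    intro N v hv
    refine (hQclosed N).mem_of_tendsto (htend v) (Filter.Eventually.of_forall fun M => ?_)
    refine Submodule.sum_mem _ (fun n hn => ?_)
    rcases lt_or_ge n N with h | h
    · rw [hu_zero N v hv n h]; exact Submodule.zero_mem _
    · exact hQmono h (hu_mem n v)
  -- the section as a linear map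
  set g : V →ₗ[k] B :=
    { toFun := fun v => ∑' n, u n v
      map_add' := by
        intro v w
        show (∑' n, u n (v + w)) = (∑' n, u n v) + ∑' n, u n w
        have : (fun n => u n (v + w)) = (fun n => u n v + u n w) := by
          funext n; rw [map_add]
        rw [this, Summable.tsum_add (hsum v) (hsum w)]
      map_smul' := by
        intro a v
        show (∑' n, u n (a • v)) = a • ∑' n, u n v
        have : (fun n => u n (a • v)) = (fun n => a • u n v) := by
          funext n; rw [map_smul]
        rw [this]
        exact Summable.tsum_const_smul a (hsum v) } with hgdef
  refine ⟨g, ?_, ?_⟩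
  · -- continuity
    apply continuous_of_continuousAt_zero g
    rw [ContinuousAt, map_zero]
    intro U hU
    obtain ⟨N, hN⟩ := hQbase U hU
    rw [Filter.mem_map]
    refine Filter.mem_of_superset (hWnhds N) (fun v hv => ?_)
    exact hN (hg_mem N v hv)
  · ext v
    exact hfg v
end

section
/- Let L be a topological Lie algebra whose underlying topological vector space is a Tate vector space (i.e., admits a c-lattice, an open linearly compact subspace). Then the open Lie subalgebras of L form a base of the topology: for every open subspace U there is an open Lie subalgebra contained in U. -/
/-- A submodule `P` of a linearly topologized vector space is *linearly compact* if every
downward-directed nonempty family of nonempty closed affine subspaces (cosets of closed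
submodules) contained in `P` has nonempty intersection. -/
def IsLinearlyCompact (k : Type*) {L : Type*} [Field k] [AddCommGroup L] [Module k L]
    [TopologicalSpace L] (P : Submodule k L) : Prop :=
  ∀ S : Set (Set L),
    (∀ A ∈ S, (∃ (v : L) (W : Submodule k L), IsClosed (W : Set L) ∧
        A = (fun w => v + w) '' (W : Set L)) ∧ A ⊆ (P : Set L) ∧ A.Nonempty) →
    DirectedOn (· ⊇ ·) S → S.Nonempty → (⋂₀ S).Nonempty

lemma key_fg {k L : Type*} [Field k] [AddCommGroup L] [Module k L] [TopologicalSpace L]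
    [IsTopologicalAddGroup L] (P M : Submodule k L) (hPc : IsLinearlyCompact k P)
    (hMP : M ≤ P) (hMopen : IsOpen (M : Set L)) : (P.map M.mkQ).FG := by
  classical
  by_contra hFG
  set N := P.map M.mkQ with hN
  have hnfd : ¬ FiniteDimensional k N := fun h => hFG ((Submodule.fg_iff_finiteDimensional N).2 h)
  let b := Module.Basis.ofVectorSpace k N
  have hinf : Infinite (Module.Basis.ofVectorSpaceIndex k N) := by
    rw [← not_finite_iff_infinite]
    intro h
    haveI := Fintype.ofFinite (Module.Basis.ofVectorSpaceIndex k N)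
    exact hnfd (Module.Finite.of_basis b)
  let e := Infinite.natEmbedding (Module.Basis.ofVectorSpaceIndex k N)
  choose g hg using fun i : ℕ => LinearMap.exists_extend (b.coord (e i))
  let φ : ℕ → L →ₗ[k] k := fun i => (g i).comp M.mkQ
  have hφval : ∀ (i : ℕ) (y : L) (hy : y ∈ P), φ i y = b.repr ⟨M.mkQ y, Submodule.mem_map_of_mem hy⟩ (e i) := by
    intro i y hy
    have : φ i y = ((g i).comp N.subtype) ⟨M.mkQ y, Submodule.mem_map_of_mem hy⟩ := rfl
    rw [this, hg i, Module.Basis.coord_apply]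
  -- lifts of basis vectors
  have hlift : ∀ j : ℕ, ∃ x ∈ P, M.mkQ x = (b (e j) : L ⧸ M) := by
    intro j
    exact Submodule.mem_map.1 (b (e j)).2
  choose x hxP hxQ using hlift
  have hδ : ∀ i j : ℕ, φ i (x j) = if i = j then 1 else 0 := by
    intro i j
    rw [hφval i (x j) (hxP j)]
    have hsub : (⟨M.mkQ (x j), Submodule.mem_map_of_mem (hxP j)⟩ : N) = b (e j) :=
      Subtype.ext (hxQ j)
    rw [hsub, Module.Basis.repr_self, Finsupp.single_apply]
    by_cases h : i = j
    · simp [h]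
    · rw [if_neg (fun hee => h (e.injective hee).symm), if_neg h]
  have hMker : ∀ (i : ℕ) (m : L), m ∈ M → φ i m = 0 := by
    intro i m hm
    have : M.mkQ m = 0 := by rwa [Submodule.mkQ_apply, Submodule.Quotient.mk_eq_zero]
    simp only [φ, LinearMap.comp_apply, this, map_zero]
  let v : ℕ → L := fun n => ∑ j ∈ Finset.range (n + 1), x j
  let W : ℕ → Submodule k L := fun n => P ⊓ ⨅ i ∈ Finset.range (n + 1), LinearMap.ker (φ i)
  let A : ℕ → Set L := fun n => (fun w => v n + w) '' (W n : Set L)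
  have hvP : ∀ n, v n ∈ P := fun n => Submodule.sum_mem _ fun j _ => hxP j
  have hφv : ∀ i n, i ≤ n → φ i (v n) = 1 := by
    intro i n hin
    simp only [v, map_sum, hδ]
    rw [Finset.sum_ite_eq]
    simp [Finset.mem_range_succ_iff, hin, Nat.lt_succ_iff]
  have hA : ∀ n y, y ∈ A n ↔ y ∈ P ∧ ∀ i ≤ n, φ i y = 1 := by
    intro n y
    constructor
    · rintro ⟨w, hw, rfl⟩
      obtain ⟨hwP, hwk⟩ := Submodule.mem_inf.1 hw
      refine ⟨P.add_mem (hvP n) hwP, fun i hi => ?_⟩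
      have : φ i w = 0 := by
        simp only [Submodule.mem_iInf, LinearMap.mem_ker] at hwk
        exact hwk i (Finset.mem_range_succ_iff.2 hi)
      rw [map_add, hφv i n hi, this, add_zero]
    · rintro ⟨hyP, hy1⟩
      refine ⟨y - v n, Submodule.mem_inf.2 ⟨P.sub_mem hyP (hvP n), ?_⟩, by simp⟩
      simp only [Submodule.mem_iInf, LinearMap.mem_ker]
      intro i hi
      rw [map_sub, hy1 i (Finset.mem_range_succ_iff.1 hi), hφv i n (Finset.mem_range_succ_iff.1 hi), sub_self]
  have hWM : ∀ n, M ≤ W n := by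
    intro n m hm
    refine Submodule.mem_inf.2 ⟨hMP hm, ?_⟩
    simp only [Submodule.mem_iInf, LinearMap.mem_ker]
    exact fun i _ => hMker i m hm
  have hWclosed : ∀ n, IsClosed ((W n : Submodule k L) : Set L) := by
    intro n
    have hopen : IsOpen ((W n : Submodule k L) : Set L) := Submodule.isOpen_mono (hWM n) hMopen
    exact AddSubgroup.isClosed_of_isOpen (W n).toAddSubgroup hopen
  have hmem : ∀ n, v n ∈ A n := fun n => (hA n (v n)).2 ⟨hvP n, fun i hi => hφv i n hi⟩
  obtain ⟨y, hy⟩ := hPc (Set.range A)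
    (by
      rintro _ ⟨n, rfl⟩
      refine ⟨⟨v n, W n, hWclosed n, rfl⟩, ?_, ⟨v n, hmem n⟩⟩
      intro y hy
      exact ((hA n y).1 hy).1)
    (by
      rintro _ ⟨m, rfl⟩ _ ⟨n, rfl⟩
      refine ⟨A (max m n), ⟨max m n, rfl⟩, ?_, ?_⟩ <;>
      · intro y hy
        obtain ⟨hyP, h1⟩ := (hA _ y).1 hy
        exact (hA _ y).2 ⟨hyP, fun i hi => h1 i (hi.trans (by omega))⟩)
    ⟨A 0, ⟨0, rfl⟩⟩
  have hyP : y ∈ P := ((hA 0 y).1 (hy _ ⟨0, rfl⟩)).1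
  have hy1 : ∀ i : ℕ, φ i y = 1 := fun i => ((hA i y).1 (hy _ ⟨i, rfl⟩)).2 i le_rfl
  -- contradiction with finiteness of support
  set yN : N := ⟨M.mkQ y, Submodule.mem_map_of_mem hyP⟩
  have hsupp : Set.range e ⊆ ↑(b.repr yN).support := by
    rintro _ ⟨i, rfl⟩
    simp only [Finset.coe_sort_coe, Finset.mem_coe, Finsupp.mem_support_iff]
    rw [← hφval i y hyP, hy1 i]
    exact one_ne_zero
  exact Set.infinite_range_of_injective e.injective
    (((b.repr yN).support.finite_toSet).subset hsupp)

/-- Let `L` be a topological Lie algebra whose underlying topological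
vector space is linearly topologized and admits an open linearly compact subspace (a
c-lattice), i.e. is a Tate vector space.  Then the open Lie subalgebras form a base of
the topology: every open subspace contains an open Lie subalgebra. -/
theorem stmt7 (k : Type*) [Field k] (L : Type*) [LieRing L] [LieAlgebra k L]
    [TopologicalSpace L] [IsTopologicalAddGroup L]
    (hbracket : Continuous fun p : L × L => ⁅p.1, p.2⁆)
    (hlin : ∀ U ∈ nhds (0 : L), ∃ W : Submodule k L, IsOpen (W : Set L) ∧ (W : Set L) ⊆ U)
    (P : Submodule k L) (hPopen : IsOpen (P : Set L)) (hPc : IsLinearlyCompact k P) :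
    ∀ U : Submodule k L, IsOpen (U : Set L) →
      ∃ Q : LieSubalgebra k L, IsOpen (Q : Set L) ∧ (Q : Set L) ⊆ (U : Set L) := by
  intro U hU
  classical
  set P' : Submodule k L := P ⊓ U with hP'
  have hP'open : IsOpen (P' : Set L) := by
    rw [hP', Submodule.coe_inf]
    exact hPopen.inter hU
  have hP'c : IsLinearlyCompact k P' := by
    intro S hS hdir hne
    refine hPc S (fun A hA => ⟨(hS A hA).1, ?_, (hS A hA).2.2⟩) hdir hne
    exact (hS A hA).2.1.trans (by rw [hP', Submodule.coe_inf]; exact Set.inter_subset_left)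
  -- Step 1: open submodule W1 ≤ P' with ⁅W1, W1⁆ ⊆ P', in fact ⁅Wa, Wb⁆ ⊆ P'
  have h00 : ((fun p : L × L => ⁅p.1, p.2⁆) ⁻¹' (P' : Set L)) ∈ nhds ((0 : L), (0 : L)) := by
    refine (hP'open.preimage hbracket).mem_nhds ?_
    show ⁅(0:L), (0:L)⁆ ∈ P'
    rw [zero_lie]; exact P'.zero_mem
  rw [mem_nhds_prod_iff] at h00
  obtain ⟨Av, hAv, Bv, hBv, hABv⟩ := h00
  obtain ⟨Wa, hWaopen, hWaA⟩ := hlin Av hAv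
  obtain ⟨Wb, hWbopen, hWbB⟩ := hlin Bv hBv
  have hbr0 : ∀ x ∈ Wa, ∀ y ∈ Wb, ⁅x, y⁆ ∈ P' := by
    intro x hx y hy
    exact hABv (Set.mk_mem_prod (hWaA hx) (hWbB hy))
  set W1 : Submodule k L := Wa ⊓ Wb ⊓ P' with hW1
  have hW1open : IsOpen (W1 : Set L) := by
    rw [hW1, Submodule.coe_inf, Submodule.coe_inf]
    exact (hWaopen.inter hWbopen).inter hP'open
  have hW1le : W1 ≤ P' := inf_le_right
  have hW1a : W1 ≤ Wa := inf_le_left.trans inf_le_left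
  have hW1b : W1 ≤ Wb := inf_le_left.trans inf_le_right
  -- Step 2: finite generation of P'/W1
  obtain ⟨s, hs⟩ := key_fg P' W1 hP'c hW1le hW1open
  have hlift : ∀ z ∈ s, ∃ p ∈ P', W1.mkQ p = z := by
    intro z hz
    have : z ∈ P'.map W1.mkQ := by
      rw [← hs]; exact Submodule.subset_span hz
    exact Submodule.mem_map.1 this
  choose! p hp1 hp2 using hlift
  -- linear maps for brackets
  let brR : L → L →ₗ[k] L := fun q =>
    { toFun := fun x => ⁅x, q⁆
      map_add' := fun a c => add_lie a c q
      map_smul' := fun c a => smul_lie c a q }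
  let brL : L → L →ₗ[k] L := fun q =>
    { toFun := fun y => ⁅q, y⁆
      map_add' := fun a c => lie_add q a c
      map_smul' := fun c a => lie_smul c q a }
  set W2 : Submodule k L := W1 ⊓ s.inf (fun z => P'.comap (brR (p z))) with hW2
  have hW2open : IsOpen (W2 : Set L) := by
    rw [hW2]
    have : ∀ t : Finset (L ⧸ W1), IsOpen ((t.inf (fun z => P'.comap (brR (p z))) : Submodule k L) : Set L) := by
      intro t
      induction t using Finset.induction with
      | empty => simp [Finset.inf_empty]
      | @insert z t hzt ih =>
        rw [Finset.inf_insert, Submodule.coe_inf]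
        refine IsOpen.inter ?_ ih
        have hcont : Continuous fun x : L => ⁅x, p z⁆ :=
          hbracket.comp (continuous_id.prodMk continuous_const)
        exact hcont.isOpen_preimage _ hP'open
    rw [Submodule.coe_inf]
    exact hW1open.inter (this s)
  have hW2le1 : W2 ≤ W1 := inf_le_left
  -- Step 3: ⁅W2, P'⁆ ⊆ P'
  have hWbr : ∀ x ∈ W2, ∀ v ∈ P', ⁅x, v⁆ ∈ P' := by
    intro x hx v hv
    -- decompose v = w + m with w ∈ span (p '' s), m ∈ W1
    have hv' : W1.mkQ v ∈ Submodule.span k (s : Set (L ⧸ W1)) := by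
      rw [hs]; exact Submodule.mem_map_of_mem hv
    have hspan : Submodule.span k (s : Set (L ⧸ W1)) ≤
        (Submodule.span k (p '' s)).map W1.mkQ := by
      rw [Submodule.span_le]
      intro z hz
      exact ⟨p z, Submodule.subset_span ⟨z, hz, rfl⟩, hp2 z hz⟩
    obtain ⟨w, hw, hwz⟩ := Submodule.mem_map.1 (hspan hv')
    have hvm : v - w ∈ W1 := by
      rw [← Submodule.ker_mkQ W1, LinearMap.mem_ker, map_sub, hwz, sub_self]
    have h1 : ⁅x, v - w⁆ ∈ P' := hbr0 x (hW1a (hW2le1 hx)) (v - w) (hW1b hvm)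
    have h2 : ⁅x, w⁆ ∈ P' := by
      have hle : Submodule.span k (p '' s) ≤ P'.comap (brL x) := by
        rw [Submodule.span_le]
        rintro _ ⟨z, hz, rfl⟩
        have hx2 : x ∈ s.inf (fun z => P'.comap (brR (p z))) := (inf_le_right : W2 ≤ _) hx
        exact (Finset.inf_le (f := fun z => P'.comap (brR (p z))) hz) hx2
      exact hle hw
    have : ⁅x, v⁆ = ⁅x, w⁆ + ⁅x, v - w⁆ := by rw [← lie_add, add_sub_cancel]
    rw [this]
    exact P'.add_mem h2 h1
  -- Step 4: the Lie subalgebra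
  let Qs : Submodule k L :=
    { carrier := {x | x ∈ P' ∧ ∀ v ∈ P', ⁅x, v⁆ ∈ P'}
      add_mem' := fun ha hb => ⟨P'.add_mem ha.1 hb.1, fun v hv => by
        rw [add_lie]; exact P'.add_mem (ha.2 v hv) (hb.2 v hv)⟩
      zero_mem' := ⟨P'.zero_mem, fun v hv => by rw [zero_lie]; exact P'.zero_mem⟩
      smul_mem' := fun c x hx => ⟨P'.smul_mem c hx.1, fun v hv => by
        rw [smul_lie]; exact P'.smul_mem c (hx.2 v hv)⟩ }
  let Q : LieSubalgebra k L :=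
    { Qs with
      lie_mem' := fun {x y} hx hy =>
        ⟨hx.2 y hy.1, fun v hv => by
          rw [lie_lie]
          exact P'.sub_mem (hx.2 _ (hy.2 v hv)) (hy.2 _ (hx.2 v hv))⟩ }
  refine ⟨Q, ?_, ?_⟩
  · have hle : W2 ⊓ P' ≤ Qs := by
      intro x hx
      obtain ⟨hx2, hxP'⟩ := Submodule.mem_inf.1 hx
      exact ⟨hxP', fun v hv => hWbr x hx2 v hv⟩
    have hopen : IsOpen ((W2 ⊓ P' : Submodule k L) : Set L) := by
      rw [Submodule.coe_inf]; exact hW2open.inter hP'open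
    exact Submodule.isOpen_mono hle hopen
  · intro x hx
    have : x ∈ P' := (hx : x ∈ Qs).1
    exact (Submodule.mem_inf.1 this).2
end

section
/- Let F, G be Tate vector spaces. The sequence 0 → Hom_f(F,G) → Hom_c(F,G) ⊕ Hom_d(F,G) → Hom(F,G) → 0 is exact, where the first map is f ↦ (f, f) and the second is (g,h) ↦ g − h. That is: every continuous linear map F → G is the difference of a map with bounded image and a map with open kernel, and the intersection of the two classes is exactly the maps having both bounded image and open kernel. -/

private lemma contOfOpenKer {k F G : Type*} [Field k]
    [AddCommGroup F] [Module k F] [TopologicalSpace F] [IsTopologicalAddGroup F]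
    [AddCommGroup G] [Module k G] [TopologicalSpace G] [IsTopologicalAddGroup G]
    (h : F →ₗ[k] G) (hk : IsOpen ((LinearMap.ker h : Submodule k F) : Set F)) :
    Continuous h := by
  apply continuous_of_continuousAt_zero h.toAddMonoidHom
  rw [ContinuousAt, map_zero]
  intro V hV
  apply Filter.mem_of_superset (hk.mem_nhds (by simp))
  intro x hx
  have hx0 : h x = 0 := hx
  simp [hx0, mem_of_mem_nhds hV]

/-- For Tate vector spaces `F`, `G` (with chosen decompositions into a
c-lattice and a d-lattice), the sequence
`0 → Hom_f(F,G) → Hom_c(F,G) ⊕ Hom_d(F,G) → Hom(F,G) → 0`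
is exact: every continuous linear map `F → G` is the difference of a continuous map with
bounded (linearly compact) image and a continuous map with open kernel, and a pair
`(g, h)` with `g - h = 0` consists of maps with both properties. -/
theorem stmt9 (k : Type*) [Field k]
    (F : Type*) [AddCommGroup F] [Module k F] [TopologicalSpace F] [IsTopologicalAddGroup F]
    [T2Space F]
    (G : Type*) [AddCommGroup G] [Module k G] [TopologicalSpace G] [IsTopologicalAddGroup G]
    [T2Space G]
    (hFlin : ∀ U ∈ nhds (0 : F), ∃ W : Submodule k F, IsOpen (W : Set F) ∧ (W : Set F) ⊆ U)
    (hGlin : ∀ U ∈ nhds (0 : G), ∃ W : Submodule k G, IsOpen (W : Set G) ∧ (W : Set G) ⊆ U)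
    (Fc Fd : Submodule k F) (hFc : IsOpen (Fc : Set F)) (hFcc : IsLinearlyCompact k Fc)
    (hFcompl : IsCompl Fc Fd)
    (Gc Gd : Submodule k G) (hGc : IsOpen (Gc : Set G)) (hGcc : IsLinearlyCompact k Gc)
    (hGcompl : IsCompl Gc Gd) :
    (∀ f : F →ₗ[k] G, Continuous f →
      ∃ g h : F →ₗ[k] G, Continuous g ∧ Continuous h ∧
        (∃ Cb : Submodule k G, IsLinearlyCompact k Cb ∧ LinearMap.range g ≤ Cb) ∧
        IsOpen ((LinearMap.ker h : Submodule k F) : Set F) ∧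
        f = g - h) ∧
    (∀ g h : F →ₗ[k] G, Continuous g → Continuous h →
      (∃ Cb : Submodule k G, IsLinearlyCompact k Cb ∧ LinearMap.range g ≤ Cb) →
      IsOpen ((LinearMap.ker h : Submodule k F) : Set F) →
      g - h = 0 →
      (∃ Cb : Submodule k G, IsLinearlyCompact k Cb ∧ LinearMap.range h ≤ Cb) ∧
      IsOpen ((LinearMap.ker g : Submodule k F) : Set F)) := by
  constructor
  · intro f hf
    set g : F →ₗ[k] G := Gc.subtype ∘ₗ (Gc.projectionOnto Gd hGcompl) ∘ₗ f with hg
    refine ⟨g, g - f, ?_, ?_, ⟨Gc, hGcc, ?_⟩, ?_, by abel⟩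
    case refine_4 =>
      apply Submodule.isOpen_mono (U := Submodule.comap f Gc)
      · intro x hx
        have hx' : f x ∈ Gc := hx
        simp only [LinearMap.mem_ker, LinearMap.sub_apply, hg, LinearMap.comp_apply]
        rw [show f x = ((⟨f x, hx'⟩ : Gc) : G) from rfl,
          Submodule.linearProjOfIsCompl_apply_left hGcompl]
        simp
      · exact hGc.preimage hf
    case refine_2 =>
      exact contOfOpenKer _ (by
        apply Submodule.isOpen_mono (U := Submodule.comap f Gc)
        · intro x hx
          have hx' : f x ∈ Gc := hx
          simp only [LinearMap.mem_ker, LinearMap.sub_apply, hg, LinearMap.comp_apply]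
          rw [show f x = ((⟨f x, hx'⟩ : Gc) : G) from rfl,
            Submodule.linearProjOfIsCompl_apply_left hGcompl]
          simp
        · exact hGc.preimage hf)
    case refine_1 =>
      have : g = f + (g - f) := by abel
      rw [this]
      exact hf.add (contOfOpenKer _ (by
        apply Submodule.isOpen_mono (U := Submodule.comap f Gc)
        · intro x hx
          have hx' : f x ∈ Gc := hx
          simp only [LinearMap.mem_ker, LinearMap.sub_apply, hg, LinearMap.comp_apply]
          rw [show f x = ((⟨f x, hx'⟩ : Gc) : G) from rfl,
            Submodule.linearProjOfIsCompl_apply_left hGcompl]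
          simp
        · exact hGc.preimage hf))
    case refine_3 =>
      rintro _ ⟨x, rfl⟩
      simp [hg]
  · intro g h _ _ hCb hker heq
    have hgh : g = h := sub_eq_zero.mp heq
    exact ⟨hgh ▸ hCb, hgh ▸ hker⟩
end

section
/- Let R be a linearly topologized complete separated commutative algebra whose open ideals form a base of the topology, and let L be a Lie algebra acting on R continuously by derivations such that open Lie subalgebras of L form a base of its topology. For open subspaces P ⊆ L and I ⊆ R with P an open Lie subalgebra and I an open P-stable ideal, let ⟨P,I⟩ ⊆ (R ⊗ L) ⊕ R be the subspace spanned by elements r⊗p (p ∈ P, r ∈ R), i·(1⊗ℓ) together with ℓ(i)-corrections, and i' ∈ I. Then ⟨P,I⟩ = R·P + (R⊗L ⊕ R)·I is a Lie subalgebra and a left R-submodule of the trivialized extension L_R^♯, and ⟨P,I⟩ ∩ R = I. -/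
open TensorProduct

noncomputable def d0 (k : Type*) [Field k] (R : Type*) [CommRing R] [Algebra k R]
    (L : Type*) [LieRing L] [LieAlgebra k L]
    (ρ : L →ₗ⁅k⁆ Derivation k R R) : (R ⊗[k] L) →ₗ[k] R :=
  TensorProduct.lift (LinearMap.flip
    { toFun := fun ℓ => (ρ ℓ).toLinearMap
      map_add' := fun x y => by ext r; simp
      map_smul' := fun c x => by ext r; simp })

@[simp] lemma d0_tmul (k : Type*) [Field k] (R : Type*) [CommRing R] [Algebra k R]
    (L : Type*) [LieRing L] [LieAlgebra k L]
    (ρ : L →ₗ⁅k⁆ Derivation k R R) (r : R) (ℓ : L) :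
    d0 k R L ρ (r ⊗ₜ[k] ℓ) = ρ ℓ r := by
  simp [d0]

/-- Let `R` be a (topological) commutative algebra, `L` a (topological)
Lie algebra acting on `R` by derivations via `ρ`, and consider the trivialized extension
`L_R^♯ = (R ⊗ L) ⊕ R` with its standard bracket and right `R`-action.  For an open Lie
subalgebra `P ⊆ L` and an open `P`-stable ideal `I ⊆ R`, the subspace
`⟨P,I⟩ = R·P + L_R^♯·I` (the `R`-span of the vectors `r ⊗ p`, `x·i` and `i'`) is a Lie
subalgebra and a left `R`-submodule of `L_R^♯`, and `⟨P,I⟩ ∩ R = I`. -/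
theorem stmt15 (k : Type*) [Field k] (R : Type*) [CommRing R] [Algebra k R]
    [TopologicalSpace R]
    (L : Type*) [LieRing L] [LieAlgebra k L] [TopologicalSpace L]
    (ρ : L →ₗ⁅k⁆ Derivation k R R)
    (P : LieSubalgebra k L) (hPopen : IsOpen (P : Set L))
    (I : Ideal R) (hIopen : IsOpen (I : Set R))
    (hstab : ∀ p ∈ P, ∀ i ∈ I, ρ p i ∈ I) :
    ∀ (B : ((R ⊗[k] L) × R) →ₗ[k] ((R ⊗[k] L) × R) →ₗ[k] ((R ⊗[k] L) × R))
      (act : ((R ⊗[k] L) × R) →ₗ[k] R →ₗ[k] ((R ⊗[k] L) × R)),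
      -- the standard bracket of the trivialized extension, on generators
      (∀ (r r' s s' : R) (ℓ ℓ' : L),
        B (r ⊗ₜ ℓ, s) (r' ⊗ₜ ℓ', s') =
          ((r * r') ⊗ₜ ⁅ℓ, ℓ'⁆ + (r * ρ ℓ r') ⊗ₜ ℓ' - (r' * ρ ℓ' r) ⊗ₜ ℓ,
            r * ρ ℓ s' - r' * ρ ℓ' s)) →
      -- the right `R`-action, on generators
      (∀ (r s i : R) (ℓ : L),
        act (r ⊗ₜ ℓ, s) i = ((i * r) ⊗ₜ ℓ, s * i + r * ρ ℓ i)) →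
      -- `⟨P,I⟩`
      (∀ x y : (R ⊗[k] L) × R,
          x ∈ Submodule.span R
              ({z : (R ⊗[k] L) × R | ∃ (r : R) (p : L), p ∈ P ∧ z = (r ⊗ₜ p, 0)} ∪
               {z | ∃ (y' : (R ⊗[k] L) × R) (i : R), i ∈ I ∧ z = act y' i} ∪
               {z | ∃ i ∈ I, z = ((0 : R ⊗[k] L), i)}) →
          y ∈ Submodule.span R
              ({z : (R ⊗[k] L) × R | ∃ (r : R) (p : L), p ∈ P ∧ z = (r ⊗ₜ p, 0)} ∪
               {z | ∃ (y' : (R ⊗[k] L) × R) (i : R), i ∈ I ∧ z = act y' i} ∪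
               {z | ∃ i ∈ I, z = ((0 : R ⊗[k] L), i)}) →
          B x y ∈ Submodule.span R
              ({z : (R ⊗[k] L) × R | ∃ (r : R) (p : L), p ∈ P ∧ z = (r ⊗ₜ p, 0)} ∪
               {z | ∃ (y' : (R ⊗[k] L) × R) (i : R), i ∈ I ∧ z = act y' i} ∪
               {z | ∃ i ∈ I, z = ((0 : R ⊗[k] L), i)})) ∧
      -- `⟨P,I⟩ ∩ R = I`
      (∀ s : R,
        (((0 : R ⊗[k] L), s) ∈ Submodule.span R
              ({z : (R ⊗[k] L) × R | ∃ (r : R) (p : L), p ∈ P ∧ z = (r ⊗ₜ p, 0)} ∪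
               {z | ∃ (y' : (R ⊗[k] L) × R) (i : R), i ∈ I ∧ z = act y' i} ∪
               {z | ∃ i ∈ I, z = ((0 : R ⊗[k] L), i)})) ↔ s ∈ I) := by
  intro B act hB hact
  classical
  set gens : Set ((R ⊗[k] L) × R) :=
      ({z : (R ⊗[k] L) × R | ∃ (r : R) (p : L), p ∈ P ∧ z = (r ⊗ₜ p, 0)} ∪
       {z | ∃ (y' : (R ⊗[k] L) × R) (i : R), i ∈ I ∧ z = act y' i} ∪
       {z | ∃ i ∈ I, z = ((0 : R ⊗[k] L), i)}) with hgens
  set SP : Submodule R ((R ⊗[k] L) × R) := Submodule.span R gens with hSPdef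
  set D : (R ⊗[k] L) →ₗ[k] R := d0 k R L ρ with hDdef
  have hDt : ∀ (r : R) (ℓ : L), D (r ⊗ₜ[k] ℓ) = ρ ℓ r := fun r ℓ => by
    rw [hDdef, d0_tmul]
  set MP : Submodule R (R ⊗[k] L) :=
    Submodule.span R {z : R ⊗[k] L | ∃ (r : R) (p : L), p ∈ P ∧ z = r ⊗ₜ[k] p} with hMPdef
  set MI : Submodule R (R ⊗[k] L) := I • (⊤ : Submodule R (R ⊗[k] L)) with hMIdef
  -- basic tensor facts
  have hsm : ∀ (r a : R) (x : L), r • (a ⊗ₜ[k] x) = (r * a) ⊗ₜ[k] x := by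
    intro r a x; rw [TensorProduct.smul_tmul', smul_eq_mul]
  have hMI_tm : ∀ c : R, c ∈ I → ∀ x : L, (c ⊗ₜ[k] x) ∈ MI := by
    intro c hc x
    have : c ⊗ₜ[k] x = c • ((1 : R) ⊗ₜ[k] x) := by rw [hsm, mul_one]
    rw [this]
    exact Submodule.smul_mem_smul hc Submodule.mem_top
  -- L1 : the defect of `D` under `R`-scaling of elements of MI lies in I
  have hL1' : ∀ (i : R), i ∈ I → ∀ (r : R) (n : R ⊗[k] L),
      D ((r * i) • n) - r * D (i • n) ∈ I := by
    intro i hi r n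
    induction n using TensorProduct.induction_on with
    | zero => simpa using I.zero_mem
    | tmul a ℓ =>
      rw [hsm, hsm, hDt, hDt]
      have h : ρ ℓ (r * i * a) - r * ρ ℓ (i * a) = (i * a) * ρ ℓ r := by
        have h2 := (ρ ℓ).leibniz r (i * a)
        rw [mul_assoc, h2, smul_eq_mul, smul_eq_mul]; ring
      rw [h]
      exact Ideal.mul_mem_right _ I (Ideal.mul_mem_right _ I hi)
    | add x y hx hy =>
      rw [smul_add, smul_add, map_add, map_add]
      have := I.add_mem hx hy
      convert this using 1
      ring
  have hL1 : ∀ x ∈ MI, ∀ r : R, D (r • x) - r * D x ∈ I := by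
    intro x hx
    refine Submodule.smul_induction_on hx ?_ ?_
    · intro i hi n _ r
      rw [smul_smul]
      exact hL1' i hi r n
    · intro x y hx hy r
      rw [smul_add, map_add, map_add]
      have := I.add_mem (hx r) (hy r)
      convert this using 1
      ring
  -- the projection argument : MI ∩ MP ⊆ span of I ⊗ P, on which D lands in I
  obtain ⟨Q, hQ⟩ := Submodule.exists_isCompl P.toSubmodule
  set pr : L →ₗ[k] L :=
    P.toSubmodule.subtype.comp (P.toSubmodule.projectionOnto Q hQ) with hprdef
  have hpr_mem : ∀ ℓ : L, pr ℓ ∈ P := fun ℓ =>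
    (P.toSubmodule.projectionOnto Q hQ ℓ).2
  have hpr_fix : ∀ p ∈ P, pr p = p := by
    intro p hp
    show ((P.toSubmodule.projectionOnto Q hQ) p : L) = p
    rw [show p = ((⟨p, hp⟩ : P.toSubmodule) : L) from rfl,
      Submodule.projectionOnto_apply_left hQ]
  set F : (R ⊗[k] L) →ₗ[k] (R ⊗[k] L) := LinearMap.lTensor R pr with hFdef
  have hFt : ∀ (a : R) (ℓ : L), F (a ⊗ₜ[k] ℓ) = a ⊗ₜ[k] pr ℓ := fun a ℓ => by
    rw [hFdef, LinearMap.lTensor_tmul]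
  have hF_smul : ∀ (r : R) (x : R ⊗[k] L), F (r • x) = r • F x := by
    intro r x
    induction x using TensorProduct.induction_on with
    | zero => simp
    | tmul a ℓ => rw [hsm, hFt, hFt, hsm]
    | add x y hx hy => rw [smul_add, map_add, map_add, smul_add, hx, hy]
  have hF_fixMP : ∀ u ∈ MP, F u = u := by
    intro u hu
    refine Submodule.span_induction ?_ ?_ ?_ ?_ hu
    · rintro z ⟨r, p, hp, rfl⟩
      rw [hFt, hpr_fix p hp]
    · exact map_zero F
    · intro x y _ _ hx hy; rw [map_add, hx, hy]
    · intro r x _ hx; rw [hF_smul, hx]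
  set MIP : Submodule R (R ⊗[k] L) :=
    Submodule.span R {z : R ⊗[k] L | ∃ i, i ∈ I ∧ ∃ p, p ∈ P ∧ z = i ⊗ₜ[k] p} with hMIPdef
  have hstep : ∀ i ∈ I, ∀ n : R ⊗[k] L, i • F n ∈ MIP := by
    intro i hi n
    induction n using TensorProduct.induction_on with
    | zero => rw [map_zero, smul_zero]; exact MIP.zero_mem
    | tmul a ℓ =>
      rw [hFt, hsm]
      have h : (i * a) ⊗ₜ[k] pr ℓ = a • (i ⊗ₜ[k] pr ℓ) := by rw [hsm, mul_comm]
      rw [h]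
      exact Submodule.smul_mem _ a
        (Submodule.subset_span ⟨i, hi, pr ℓ, hpr_mem ℓ, rfl⟩)
    | add x y hx hy => rw [map_add, smul_add]; exact MIP.add_mem hx hy
  have hF_MI : ∀ u ∈ MI, F u ∈ MIP := by
    intro u hu
    refine Submodule.smul_induction_on hu ?_ ?_
    · intro i hi n _
      rw [hF_smul]
      exact hstep i hi n
    · intro x y hx hy
      rw [map_add]; exact MIP.add_mem hx hy
  have hMIP_d0 : ∀ u ∈ MIP, D u ∈ I := by
    have key : ∀ u ∈ MIP, ∀ r : R, D (r • u) ∈ I := by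
      intro u hu
      refine Submodule.span_induction ?_ ?_ ?_ ?_ hu
      · rintro z ⟨i, hi, p, hp, rfl⟩ r
        rw [hsm, hDt]
        have h := (ρ p).leibniz r i
        rw [smul_eq_mul, smul_eq_mul] at h
        rw [h]
        exact I.add_mem (I.mul_mem_left r (hstab p hp i hi))
          (Ideal.mul_mem_right _ I hi)
      · intro r; rw [smul_zero, map_zero]; exact I.zero_mem
      · intro x y _ _ hx hy r
        rw [smul_add, map_add]; exact I.add_mem (hx r) (hy r)
      · intro a x _ hx r
        rw [smul_smul]; exact hx (r * a)
    intro u hu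
    have := key u hu 1
    rwa [one_smul] at this
  have hL2 : ∀ u ∈ MI, u ∈ MP → D u ∈ I := by
    intro u hMIu hMPu
    rw [← hF_fixMP u hMPu]
    exact hMIP_d0 _ (hF_MI u hMIu)
  -- the pure elements span everything over k
  have hpure_span : ∀ z : (R ⊗[k] L) × R,
      z ∈ Submodule.span k
        {w : (R ⊗[k] L) × R | ∃ (r : R) (ℓ : L) (s : R), w = (r ⊗ₜ[k] ℓ, s)} := by
    intro z
    obtain ⟨t, s⟩ := z
    have h1 : ((t, (0 : R)) : (R ⊗[k] L) × R) ∈ Submodule.span k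
        {w : (R ⊗[k] L) × R | ∃ (r : R) (ℓ : L) (s : R), w = (r ⊗ₜ[k] ℓ, s)} := by
      induction t using TensorProduct.induction_on with
      | zero => exact Submodule.zero_mem _
      | tmul r ℓ => exact Submodule.subset_span ⟨r, ℓ, 0, rfl⟩
      | add x y hx hy =>
        have := Submodule.add_mem _ hx hy
        simpa using this
    have h2 : (((0 : R ⊗[k] L), s) : (R ⊗[k] L) × R) ∈ Submodule.span k
        {w : (R ⊗[k] L) × R | ∃ (r : R) (ℓ : L) (s : R), w = (r ⊗ₜ[k] ℓ, s)} :=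
      Submodule.subset_span ⟨0, 0, s, by simp⟩
    have := Submodule.add_mem _ h1 h2
    simpa using this
  -- the predicate S0
  let S0 : (R ⊗[k] L) × R → Prop := fun z =>
    ∃ u, u ∈ MI ∧ z.1 - u ∈ MP ∧ z.2 - D u ∈ I
  have hS0_zero : S0 0 := ⟨0, MI.zero_mem, by simp, by simp⟩
  have hS0_add : ∀ y z, S0 y → S0 z → S0 (y + z) := by
    rintro y z ⟨u, hu, h1, h2⟩ ⟨v, hv, h3, h4⟩
    refine ⟨u + v, MI.add_mem hu hv, ?_, ?_⟩
    · have h : (y + z).1 - (u + v) = (y.1 - u) + (z.1 - v) := by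
        simp only [Prod.fst_add]; abel
      rw [h]; exact MP.add_mem h1 h3
    · have h : (y + z).2 - D (u + v) = (y.2 - D u) + (z.2 - D v) := by
        simp only [Prod.snd_add, map_add]; ring
      rw [h]; exact I.add_mem h2 h4
  have hS0_smul : ∀ (r : R) z, S0 z → S0 (r • z) := by
    rintro r z ⟨u, hu, h1, h2⟩
    refine ⟨r • u, Submodule.smul_mem _ r hu, ?_, ?_⟩
    · have h : (r • z).1 - r • u = r • (z.1 - u) := by
        simp only [Prod.smul_fst, smul_sub]
      rw [h]; exact Submodule.smul_mem _ r h1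
    · have h : (r • z).2 - D (r • u) = r * (z.2 - D u) - (D (r • u) - r * D u) := by
        simp only [Prod.smul_snd, smul_eq_mul]; ring
      rw [h]
      exact I.sub_mem (I.mul_mem_left r h2) (hL1 u hu r)
  have hS0_ksmul : ∀ (c : k) z, S0 z → S0 (c • z) := by
    intro c z hz
    rw [← algebraMap_smul R c z]
    exact hS0_smul _ z hz
  have hS0_act : ∀ (y' : (R ⊗[k] L) × R) (i : R), i ∈ I → S0 (act y' i) := by
    intro y' i hi
    refine Submodule.span_induction ?_ ?_ ?_ ?_ (hpure_span y')
    · rintro w ⟨r, ℓ, s, rfl⟩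
      rw [hact]
      refine ⟨(i * r) ⊗ₜ[k] ℓ, hMI_tm _ (Ideal.mul_mem_right r I hi) ℓ, ?_, ?_⟩
      · simp
      · show s * i + r * ρ ℓ i - D ((i * r) ⊗ₜ[k] ℓ) ∈ I
        rw [hDt]
        have h := (ρ ℓ).leibniz i r
        rw [smul_eq_mul, smul_eq_mul] at h
        rw [h]
        have heq : s * i + r * ρ ℓ i - (i * ρ ℓ r + r * ρ ℓ i) = s * i - i * ρ ℓ r := by
          ring
        rw [heq]
        exact I.sub_mem (I.mul_mem_left s hi) (Ideal.mul_mem_right _ I hi)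
    · rw [map_zero, LinearMap.zero_apply]; exact hS0_zero
    · intro x y _ _ hx hy
      rw [map_add, LinearMap.add_apply]; exact hS0_add _ _ hx hy
    · intro c x _ hx
      rw [map_smul, LinearMap.smul_apply]; exact hS0_ksmul c _ hx
  have hSP_S0 : ∀ z ∈ SP, S0 z := by
    intro z hz
    refine Submodule.span_induction (p := fun z _ => S0 z) ?_ hS0_zero
      (fun x y _ _ => hS0_add x y) (fun r x _ => hS0_smul r x) hz
    rintro g (hg | hg)
    · rcases hg with hg | hg
      · obtain ⟨r, p, hp, rfl⟩ := hg
        have hmem : r ⊗ₜ[k] p ∈ MP := Submodule.subset_span ⟨r, p, hp, rfl⟩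
        exact ⟨0, MI.zero_mem, by simpa using hmem, by simp⟩
      · obtain ⟨y', i, hi, rfl⟩ := hg
        exact hS0_act y' i hi
    · obtain ⟨i, hi, rfl⟩ := hg
      exact ⟨0, MI.zero_mem, by simp, by simpa using hi⟩
  -- S0 implies membership in SP
  have hMP_SP : ∀ t ∈ MP, ((t, (0 : R)) : (R ⊗[k] L) × R) ∈ SP := by
    intro t ht
    refine Submodule.span_induction ?_ ?_ ?_ ?_ ht
    · rintro z ⟨r, p, hp, rfl⟩
      exact Submodule.subset_span (Or.inl (Or.inl ⟨r, p, hp, rfl⟩))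
    · exact SP.zero_mem
    · intro x y _ _ hx hy
      have h : ((x + y, (0 : R)) : (R ⊗[k] L) × R) = (x, 0) + (y, 0) := by simp
      rw [h]; exact SP.add_mem hx hy
    · intro r x _ hx
      have h : ((r • x, (0 : R)) : (R ⊗[k] L) × R) = r • (x, (0 : R)) := by
        simp [Prod.smul_mk]
      rw [h]; exact Submodule.smul_mem _ r hx
  have hI_SP : ∀ j ∈ I, (((0 : R ⊗[k] L), j) : (R ⊗[k] L) × R) ∈ SP := by
    intro j hj
    exact Submodule.subset_span (Or.inr ⟨j, hj, rfl⟩)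
  have hMI_SP : ∀ u ∈ MI, ((u, D u) : (R ⊗[k] L) × R) ∈ SP := by
    have haux : ∀ i ∈ I, ∀ n : R ⊗[k] L,
        ((i • n, D (i • n)) : (R ⊗[k] L) × R) ∈ SP := by
      intro i hi n
      induction n using TensorProduct.induction_on with
      | zero => simp only [smul_zero, map_zero]; exact SP.zero_mem
      | tmul a ℓ =>
        have heq : ((i • (a ⊗ₜ[k] ℓ), D (i • (a ⊗ₜ[k] ℓ))) : (R ⊗[k] L) × R)
            = a • (act ((1 : R) ⊗ₜ[k] ℓ, 0) i) + ((0 : R ⊗[k] L), i * ρ ℓ a) := by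
          rw [hact, hsm]
          have h := (ρ ℓ).leibniz i a
          rw [smul_eq_mul, smul_eq_mul] at h
          refine Prod.ext_iff.mpr ⟨?_, ?_⟩
          · show (i * a) ⊗ₜ[k] ℓ = a • ((i * 1) ⊗ₜ[k] ℓ) + 0
            rw [hsm, add_zero, mul_one, mul_comm]
          · show D ((i * a) ⊗ₜ[k] ℓ) = a • (0 * i + 1 * ρ ℓ i) + i * ρ ℓ a
            rw [hDt, h, smul_eq_mul]; ring
        rw [heq]
        refine SP.add_mem (Submodule.smul_mem _ a ?_) (hI_SP _ (Ideal.mul_mem_right _ I hi))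
        exact Submodule.subset_span (Or.inl (Or.inr ⟨((1 : R) ⊗ₜ[k] ℓ, 0), i, hi, rfl⟩))
      | add x y hx hy =>
        have h : ((i • (x + y), D (i • (x + y))) : (R ⊗[k] L) × R)
            = (i • x, D (i • x)) + (i • y, D (i • y)) := by
          rw [smul_add, map_add]; rfl
        rw [h]; exact SP.add_mem hx hy
    intro u hu
    refine Submodule.smul_induction_on hu ?_ ?_
    · intro i hi n _; exact haux i hi n
    · intro x y hx hy
      have h : ((x + y, D (x + y)) : (R ⊗[k] L) × R) = (x, D x) + (y, D y) := by
        rw [map_add]; rfl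
      rw [h]; exact SP.add_mem hx hy
  have hS0_SP : ∀ z, S0 z → z ∈ SP := by
    rintro ⟨t, s⟩ ⟨u, hu, h1, h2⟩
    have hz : ((t, s) : (R ⊗[k] L) × R)
        = (t - u, 0) + (u, D u) + ((0 : R ⊗[k] L), s - D u) := by
      refine Prod.ext_iff.mpr ⟨?_, ?_⟩
      · show t = t - u + u + 0; abel
      · show s = 0 + D u + (s - D u); ring
    rw [hz]
    exact SP.add_mem (SP.add_mem (hMP_SP _ h1) (hMI_SP u hu)) (hI_SP _ h2)
  -- k-smul closure of SP
  have hSP_ksmul : ∀ (c : k) z, z ∈ SP → c • z ∈ SP := by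
    intro c z hz
    rw [← algebraMap_smul R c z]
    exact Submodule.smul_mem _ _ hz
  -- the set G of "good" pure generators
  set G : Set ((R ⊗[k] L) × R) :=
    {z : (R ⊗[k] L) × R | (∃ a m, m ∈ P ∧ z = (a ⊗ₜ[k] m, 0)) ∨
      (∃ a m c, a ∈ I ∧ c - ρ m a ∈ I ∧ z = (a ⊗ₜ[k] m, c))} with hGdef
  set SPg : Submodule k ((R ⊗[k] L) × R) := Submodule.span k G with hSPgdef
  have hG_smul : ∀ (r : R) z, z ∈ G → r • z ∈ G := by
    rintro r z (⟨a, m, hm, rfl⟩ | ⟨a, m, c, ha, hc, rfl⟩)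
    · left
      refine ⟨r * a, m, hm, ?_⟩
      refine Prod.ext_iff.mpr ⟨?_, ?_⟩
      · show r • (a ⊗ₜ[k] m) = (r * a) ⊗ₜ[k] m; rw [hsm]
      · show r • (0 : R) = 0; simp
    · right
      refine ⟨r * a, m, r * c, I.mul_mem_left r ha, ?_, ?_⟩
      · have h := (ρ m).leibniz r a
        rw [smul_eq_mul, smul_eq_mul] at h
        have heq : r * c - ρ m (r * a) = r * (c - ρ m a) - a * ρ m r := by
          rw [h]; ring
        rw [heq]
        exact I.sub_mem (I.mul_mem_left r hc) (Ideal.mul_mem_right _ I ha)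
      · refine Prod.ext_iff.mpr ⟨?_, ?_⟩
        · show r • (a ⊗ₜ[k] m) = (r * a) ⊗ₜ[k] m; rw [hsm]
        · show r • c = r * c; rw [smul_eq_mul]
  have hSPg_smulR : ∀ (r : R) z, z ∈ SPg → r • z ∈ SPg := by
    intro r z hz
    refine Submodule.span_induction ?_ ?_ ?_ ?_ hz
    · intro g hg; exact Submodule.subset_span (hG_smul r g hg)
    · rw [smul_zero]; exact SPg.zero_mem
    · intro x y _ _ hx hy; rw [smul_add]; exact SPg.add_mem hx hy
    · intro c x _ hx
      have h : r • (c • x) = c • (r • x) := by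
        rw [← algebraMap_smul R c x, ← algebraMap_smul R c (r • x), smul_smul,
          smul_smul, mul_comm]
      rw [h]; exact Submodule.smul_mem _ c hx
  have hSP_SPg : ∀ z ∈ SP, z ∈ SPg := by
    intro z hz
    refine Submodule.span_induction ?_ SPg.zero_mem
      (fun x y _ _ hx hy => SPg.add_mem hx hy) (fun r x _ hx => hSPg_smulR r x hx) hz
    rintro g (hg | hg)
    · rcases hg with hg | hg
      · obtain ⟨r, p, hp, rfl⟩ := hg
        exact Submodule.subset_span (Or.inl ⟨r, p, hp, rfl⟩)
      · obtain ⟨y', i, hi, rfl⟩ := hg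
        refine Submodule.span_induction ?_ ?_ ?_ ?_ (hpure_span y')
        · rintro w ⟨r, ℓ, s, rfl⟩
          rw [hact]
          refine Submodule.subset_span (Or.inr ⟨i * r, ℓ, s * i + r * ρ ℓ i,
            Ideal.mul_mem_right r I hi, ?_, rfl⟩)
          have h := (ρ ℓ).leibniz i r
          rw [smul_eq_mul, smul_eq_mul] at h
          have heq : s * i + r * ρ ℓ i - ρ ℓ (i * r) = s * i - i * ρ ℓ r := by
            rw [h]; ring
          rw [heq]
          exact I.sub_mem (I.mul_mem_left s hi) (Ideal.mul_mem_right _ I hi)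
        · rw [map_zero, LinearMap.zero_apply]; exact SPg.zero_mem
        · intro x y _ _ hx hy
          rw [map_add, LinearMap.add_apply]; exact SPg.add_mem hx hy
        · intro c x _ hx
          rw [map_smul, LinearMap.smul_apply]; exact Submodule.smul_mem _ c hx
    · obtain ⟨i, hi, rfl⟩ := hg
      refine Submodule.subset_span (Or.inr ⟨0, 0, i, I.zero_mem, by simpa using hi, by simp⟩)
  -- antisymmetry of B on pure elements
  have hanti : ∀ (a : R) (m : L) (c : R) (a' : R) (m' : L) (c' : R),
      B (a ⊗ₜ[k] m, c) (a' ⊗ₜ[k] m', c') = - B (a' ⊗ₜ[k] m', c') (a ⊗ₜ[k] m, c) := by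
    intro a m c a' m' c'
    rw [hB, hB]
    refine Prod.ext_iff.mpr ⟨?_, ?_⟩
    · show (a * a') ⊗ₜ[k] ⁅m, m'⁆ + (a * ρ m a') ⊗ₜ[k] m' - (a' * ρ m' a) ⊗ₜ[k] m
        = -((a' * a) ⊗ₜ[k] ⁅m', m⁆ + (a' * ρ m' a) ⊗ₜ[k] m - (a * ρ m a') ⊗ₜ[k] m')
      rw [mul_comm a' a, ← lie_skew m m', tmul_neg]
      abel
    · show a * ρ m c' - a' * ρ m' c = -(a' * ρ m' c - a * ρ m c')
      ring
  -- case AA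
  have hcaseAA : ∀ (a : R) (m : L) (a' : R) (m' : L), m ∈ P → m' ∈ P →
      B (a ⊗ₜ[k] m, 0) (a' ⊗ₜ[k] m', 0) ∈ SP := by
    intro a m a' m' hm hm'
    rw [hB]
    have h0 : a * ρ m (0 : R) - a' * ρ m' (0 : R) = 0 := by simp
    rw [h0]
    refine hMP_SP _ ?_
    refine MP.sub_mem (MP.add_mem ?_ ?_) ?_
    · exact Submodule.subset_span ⟨a * a', ⁅m, m'⁆, P.lie_mem hm hm', rfl⟩
    · exact Submodule.subset_span ⟨a * ρ m a', m', hm', rfl⟩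
    · exact Submodule.subset_span ⟨a' * ρ m' a, m, hm, rfl⟩
  -- case AB
  have hcaseAB : ∀ (a : R) (m : L) (a' : R) (m' : L) (c' : R), m ∈ P → a' ∈ I →
      c' - ρ m' a' ∈ I → B (a ⊗ₜ[k] m, 0) (a' ⊗ₜ[k] m', c') ∈ SP := by
    intro a m a' m' c' hm ha' hc'
    have hu : (a * a') ⊗ₜ[k] ⁅m, m'⁆ + (a * ρ m a') ⊗ₜ[k] m' ∈ MI :=
      MI.add_mem (hMI_tm _ (I.mul_mem_left a ha') _)
        (hMI_tm _ (I.mul_mem_left a (hstab m hm a' ha')) _)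
    set u : R ⊗[k] L := (a * a') ⊗ₜ[k] ⁅m, m'⁆ + (a * ρ m a') ⊗ₜ[k] m' with hudef
    have keyeq : B (a ⊗ₜ[k] m, 0) (a' ⊗ₜ[k] m', c')
        = (u, D u) + ((-(a' * ρ m' a)) ⊗ₜ[k] m, 0) + ((0 : R ⊗[k] L), a * ρ m c' - D u) := by
      rw [hB]
      refine Prod.ext_iff.mpr ⟨?_, ?_⟩
      · show (a * a') ⊗ₜ[k] ⁅m, m'⁆ + (a * ρ m a') ⊗ₜ[k] m' - (a' * ρ m' a) ⊗ₜ[k] m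
          = u + (-(a' * ρ m' a)) ⊗ₜ[k] m + 0
        rw [hudef, neg_tmul]; abel
      · show a * ρ m c' - a' * ρ m' 0 = D u + 0 + (a * ρ m c' - D u)
        simp
    rw [keyeq]
    refine SP.add_mem (SP.add_mem (hMI_SP u hu) ?_) (hI_SP _ ?_)
    · exact hMP_SP _ (Submodule.subset_span ⟨-(a' * ρ m' a), m, hm, rfl⟩)
    · -- a * ρ m c' - D u ∈ I
      have e1 : D u = ρ m (ρ m' (a * a')) - ρ m' (ρ m (a * a')) + ρ m' (a * ρ m a') := by
        rw [hudef, map_add, hDt, hDt]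
        have hbr : ρ ⁅m, m'⁆ = ⁅ρ m, ρ m'⁆ := ρ.map_lie m m'
        rw [hbr, Derivation.commutator_apply]
      have e2 : a * ρ m c' - D u = a * ρ m (c' - ρ m' a') - (ρ m a') * (ρ m' a)
          - a' * (ρ m (ρ m' a)) + a' * (ρ m' (ρ m a)) := by
        rw [e1]
        simp only [Derivation.leibniz, map_add, map_sub, smul_eq_mul]
        ring
      rw [e2]
      refine I.add_mem (I.sub_mem (I.sub_mem ?_ ?_) ?_) ?_
      · exact I.mul_mem_left a (hstab m hm _ hc')
      · exact Ideal.mul_mem_right _ I (hstab m hm a' ha')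
      · exact Ideal.mul_mem_right _ I ha'
      · exact Ideal.mul_mem_right _ I ha'
  -- case BB
  have hcaseBB : ∀ (a : R) (m : L) (c : R) (a' : R) (m' : L) (c' : R), a ∈ I → a' ∈ I →
      c - ρ m a ∈ I → c' - ρ m' a' ∈ I →
      B (a ⊗ₜ[k] m, c) (a' ⊗ₜ[k] m', c') ∈ SP := by
    intro a m c a' m' c' ha ha' hc hc'
    set T : R ⊗[k] L := (a * a') ⊗ₜ[k] ⁅m, m'⁆ + (a * ρ m a') ⊗ₜ[k] m'
      - (a' * ρ m' a) ⊗ₜ[k] m with hTdef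
    have hT : T ∈ MI := by
      rw [hTdef]
      refine MI.sub_mem (MI.add_mem ?_ ?_) ?_
      · exact hMI_tm _ (I.mul_mem_left a ha') _
      · exact hMI_tm _ (Ideal.mul_mem_right _ I ha) _
      · exact hMI_tm _ (Ideal.mul_mem_right _ I ha') _
    have hd0T : a * ρ m c' - a' * ρ m' c - D T
        = a * ρ m (c' - ρ m' a') - a' * ρ m' (c - ρ m a) := by
      rw [hTdef, map_sub, map_add, hDt, hDt, hDt]
      have hbr : ρ ⁅m, m'⁆ = ⁅ρ m, ρ m'⁆ := ρ.map_lie m m'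
      rw [hbr, Derivation.commutator_apply]
      simp only [Derivation.leibniz, map_add, map_sub, smul_eq_mul]
      ring
    have keyeq : B (a ⊗ₜ[k] m, c) (a' ⊗ₜ[k] m', c')
        = (T, D T) + ((0 : R ⊗[k] L), a * ρ m c' - a' * ρ m' c - D T) := by
      rw [hB]
      refine Prod.ext_iff.mpr ⟨?_, ?_⟩
      · show (a * a') ⊗ₜ[k] ⁅m, m'⁆ + (a * ρ m a') ⊗ₜ[k] m' - (a' * ρ m' a) ⊗ₜ[k] m
          = T + 0
        rw [hTdef, add_zero]
      · show a * ρ m c' - a' * ρ m' c = D T + (a * ρ m c' - a' * ρ m' c - D T)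
        ring
    rw [keyeq]
    refine SP.add_mem (hMI_SP T hT) (hI_SP _ ?_)
    rw [hd0T]
    exact I.sub_mem (Ideal.mul_mem_right _ I ha) (Ideal.mul_mem_right _ I ha')
  -- pairs of good generators
  have hpair : ∀ z ∈ G, ∀ z' ∈ G, B z z' ∈ SP := by
    rintro z (⟨a, m, hm, rfl⟩ | ⟨a, m, c, ha, hc, rfl⟩)
      z' (⟨a', m', hm', rfl⟩ | ⟨a', m', c', ha', hc', rfl⟩)
    · exact hcaseAA a m a' m' hm hm'
    · exact hcaseAB a m a' m' c' hm ha' hc'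
    · rw [hanti]
      exact SP.neg_mem (hcaseAB a' m' a m c hm' ha hc)
    · exact hcaseBB a m c a' m' c' ha ha' hc hc'
  -- bilinearity closure
  have hBmem : ∀ x ∈ SPg, ∀ y ∈ SPg, B x y ∈ SP := by
    intro x hx
    refine Submodule.span_induction ?_ ?_ ?_ ?_ hx
    · intro g hg y hy
      refine Submodule.span_induction ?_ ?_ ?_ ?_ hy
      · intro g' hg'; exact hpair g hg g' hg'
      · rw [map_zero]; exact SP.zero_mem
      · intro y1 y2 _ _ h1 h2; rw [map_add]; exact SP.add_mem h1 h2
      · intro c y1 _ h1; rw [map_smul]; exact hSP_ksmul c _ h1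
    · intro y _; rw [map_zero, LinearMap.zero_apply]; exact SP.zero_mem
    · intro x1 x2 _ _ h1 h2 y hy
      rw [map_add, LinearMap.add_apply]; exact SP.add_mem (h1 y hy) (h2 y hy)
    · intro c x1 _ h1 y hy
      rw [map_smul, LinearMap.smul_apply]; exact hSP_ksmul c _ (h1 y hy)
  constructor
  · intro x y hx hy
    exact hBmem x (hSP_SPg x hx) y (hSP_SPg y hy)
  · intro s
    constructor
    · intro h
      obtain ⟨u, hu, h1, h2⟩ := hSP_S0 _ h
      have h1' : u ∈ MP := by
        have := MP.neg_mem h1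
        simpa using this
      have hd := hL2 u hu h1'
      have : s = (s - D u) + D u := by ring
      rw [this]
      exact I.add_mem h2 hd
    · intro hs
      exact Submodule.subset_span (Or.inr ⟨s, hs, rfl⟩)
end

section
/- Let V be a k-vector space and Cl(V ⊕ V*) the Clifford algebra of the hyperbolic quadratic form q(v, φ) = φ(v) on V ⊕ V*. Then the subspace spanned by products v·φ − (1/2)φ(v)·1 for v ∈ V, φ ∈ V* (degree-two elements of the Clifford algebra) is closed under the Clifford commutator and is isomorphic as a Lie algebra to gl(V) = End(V) when V is finite-dimensional; more precisely, the commutator [vφ, wψ] in Cl corresponds to the commutator of the rank-one endomorphisms φ(−)v and ψ(−)w up to central terms, exhibiting a central extension of gl(V) inside Cl (the Clifford/Tate extension). -/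
set_option maxHeartbeats 1000000

open CliffordAlgebra TensorProduct


/-- Let `V` be a finite-dimensional vector space over a field `k` of
characteristic zero and `Cl = Cl(V* ⊕ V)` the Clifford algebra of the hyperbolic
quadratic form `q(φ, v) = φ(v)`.  Then the assignment sending the rank-one endomorphism
`E_{v,φ} = φ(−)·v` to `ι(v)·ι(φ) − (1/2)·φ(v)` extends to a linear map
`Φ : gl(V) → Cl`, and the Clifford commutators of the images reproduce the
`gl(V)`-commutators up to scalar central terms: `[Φ f, Φ g] = Φ [f,g] + c(f,g)·1` for a
bilinear form `c`, exhibiting a central extension of `gl(V)` inside `Cl` (the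
Clifford/Tate extension). -/
theorem stmt17 (k : Type*) [Field k] [CharZero k]
    (V : Type*) [AddCommGroup V] [Module k V] [FiniteDimensional k V] :
    ∃ (Φ : (V →ₗ[k] V) →ₗ[k] CliffordAlgebra (QuadraticForm.dualProd k V))
      (c : (V →ₗ[k] V) →ₗ[k] (V →ₗ[k] V) →ₗ[k] k),
      -- value on rank-one endomorphisms `E_{v,φ} = φ(−) • v`
      (∀ (v : V) (φ : Module.Dual k V),
        Φ (LinearMap.smulRight φ v) =
          CliffordAlgebra.ι (QuadraticForm.dualProd k V) ((0 : Module.Dual k V), v) *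
            CliffordAlgebra.ι (QuadraticForm.dualProd k V) (φ, (0 : V)) -
          algebraMap k _ ((1 / 2 : k) * φ v)) ∧
      -- commutators reproduce `gl(V)`-commutators up to central scalars
      (∀ f g : V →ₗ[k] V,
        Φ f * Φ g - Φ g * Φ f = Φ (f ∘ₗ g - g ∘ₗ f) + algebraMap k _ (c f g)) := by
  classical
  set Q := QuadraticForm.dualProd k V with hQdef
  have hpolar : ∀ (φ ψ : Module.Dual k V) (v w : V),
      QuadraticMap.polar Q (φ, v) (ψ, w) = φ w + ψ v := by
    intro φ ψ v w
    simp only [QuadraticMap.polar, hQdef, QuadraticForm.dualProd_apply, Prod.fst_add,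
      Prod.snd_add, LinearMap.add_apply, map_add]
    ring
  -- bilinear map
  let bil : Module.Dual k V →ₗ[k] V →ₗ[k] CliffordAlgebra Q :=
    LinearMap.mk₂ k
      (fun φ v => ι Q ((0 : Module.Dual k V), v) * ι Q (φ, (0 : V))
        - algebraMap k _ ((1 / 2 : k) * φ v))
      (by
        intro φ ψ v
        have h : ((φ + ψ, (0 : V)) : Module.Dual k V × V) = (φ, 0) + (ψ, 0) := by
          simp [Prod.ext_iff]
        rw [h, map_add, mul_add]
        simp only [LinearMap.add_apply, mul_add, map_add]
        abel)
      (by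
        intro r φ v
        have h : ((r • φ, (0 : V)) : Module.Dual k V × V) = r • (φ, 0) := by
          simp [Prod.ext_iff]
        have h2 : r • (algebraMap k (CliffordAlgebra Q) ((1 / 2 : k) * φ v))
            = algebraMap k _ (r * ((1 / 2 : k) * φ v)) := by
          rw [Algebra.smul_def, ← map_mul]
        rw [h, map_smul, mul_smul_comm, smul_sub, h2]
        congr 2
        simp [LinearMap.smul_apply]
        ring)
      (by
        intro φ v w
        have h : (((0 : Module.Dual k V), v + w) : Module.Dual k V × V) = (0, v) + (0, w) := by
          simp [Prod.ext_iff]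
        rw [h, map_add, add_mul]
        simp only [map_add, mul_add]
        abel)
      (by
        intro r φ v
        have h : (((0 : Module.Dual k V), r • v) : Module.Dual k V × V) = r • (0, v) := by
          simp [Prod.ext_iff]
        have h2 : r • (algebraMap k (CliffordAlgebra Q) ((1 / 2 : k) * φ v))
            = algebraMap k _ (r * ((1 / 2 : k) * φ v)) := by
          rw [Algebra.smul_def, ← map_mul]
        rw [h, map_smul, smul_mul_assoc, smul_sub, h2]
        congr 2
        rw [map_smul]
        simp [smul_eq_mul]
        ring)
  let e := dualTensorHomEquiv k V V
  have he : ∀ (φ : Module.Dual k V) (v : V), e (φ ⊗ₜ[k] v) = LinearMap.smulRight φ v := by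
    intro φ v
    ext x
    simp [e, dualTensorHomEquiv, dualTensorHomEquivOfBasis_apply]
  let Φ : (V →ₗ[k] V) →ₗ[k] CliffordAlgebra Q :=
    (TensorProduct.lift bil) ∘ₗ e.symm.toLinearMap
  have hΦ : ∀ (v : V) (φ : Module.Dual k V),
      Φ (LinearMap.smulRight φ v) =
        ι Q ((0 : Module.Dual k V), v) * ι Q (φ, (0 : V))
          - algebraMap k _ ((1 / 2 : k) * φ v) := by
    intro v φ
    have : e.symm (LinearMap.smulRight φ v) = φ ⊗ₜ[k] v := by
      rw [LinearEquiv.symm_apply_eq, he]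
    simp only [Φ, LinearMap.comp_apply, LinearEquiv.coe_toLinearMap, this, lift.tmul]
    rfl
  refine ⟨Φ, 0, fun v φ => hΦ v φ, ?_⟩
  -- commutator identity with c = 0
  have key : ∀ (v w : V) (φ ψ : Module.Dual k V),
      Φ (LinearMap.smulRight φ v) * Φ (LinearMap.smulRight ψ w)
        - Φ (LinearMap.smulRight ψ w) * Φ (LinearMap.smulRight φ v)
      = Φ ((LinearMap.smulRight φ v) ∘ₗ (LinearMap.smulRight ψ w)
          - (LinearMap.smulRight ψ w) ∘ₗ (LinearMap.smulRight φ v)) := by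
    intro v w φ ψ
    have hco : ∀ (v w : V) (φ ψ : Module.Dual k V),
        (LinearMap.smulRight φ v) ∘ₗ (LinearMap.smulRight ψ w)
          = φ w • LinearMap.smulRight ψ v := by
      intro v w φ ψ
      ext x
      simp only [LinearMap.coe_comp, Function.comp_apply, LinearMap.smulRight_apply,
        LinearMap.smul_apply, map_smul, smul_eq_mul, smul_smul]
      rw [mul_comm]
    set a := ι Q ((0 : Module.Dual k V), v) with ha
    set b := ι Q (φ, (0 : V)) with hb
    set a' := ι Q ((0 : Module.Dual k V), w) with ha'
    set b' := ι Q (ψ, (0 : V)) with hb'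
    have hba' : b * a' = algebraMap k _ (φ w) - a' * b := by
      rw [hb, ha', ι_mul_ι_comm, hpolar]; simp
    have hb'a : b' * a = algebraMap k _ (ψ v) - a * b' := by
      rw [hb', ha, ι_mul_ι_comm, hpolar]; simp
    have haa' : a * a' = -(a' * a) := by
      rw [ha, ha', ι_mul_ι_comm, hpolar]; simp
    have hbb' : b * b' = -(b' * b) := by
      rw [hb, hb', ι_mul_ι_comm, hpolar]; simp
    have e1 : a * b * (a' * b') = φ w • (a * b') - a' * a * (b' * b) := by
      rw [show a * b * (a' * b') = a * (b * a') * b' by noncomm_ring, hba']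
      rw [mul_sub, sub_mul]
      congr 1
      · rw [← Algebra.commutes, mul_assoc, ← Algebra.smul_def]
      · rw [show a * (a' * b) * b' = a * a' * (b * b') by noncomm_ring, haa', hbb',
          neg_mul_neg, mul_assoc]
    have e2 : a' * b' * (a * b) = ψ v • (a' * b) - a' * a * (b' * b) := by
      rw [show a' * b' * (a * b) = a' * (b' * a) * b by noncomm_ring, hb'a]
      rw [mul_sub, sub_mul]
      congr 1
      · rw [← Algebra.commutes, mul_assoc, ← Algebra.smul_def]
      · noncomm_ring
    rw [hΦ, hΦ, hco, hco, map_sub, map_smul, map_smul, hΦ, hΦ]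
    have hcomm :
        (a * b - algebraMap k _ ((1 / 2 : k) * φ v)) *
            (a' * b' - algebraMap k _ ((1 / 2 : k) * ψ w)) -
          (a' * b' - algebraMap k _ ((1 / 2 : k) * ψ w)) *
            (a * b - algebraMap k _ ((1 / 2 : k) * φ v))
        = a * b * (a' * b') - a' * b' * (a * b) := by
      simp only [mul_sub, sub_mul]
      rw [Algebra.commutes ((1 / 2 : k) * φ v) (a' * b'),
        Algebra.commutes ((1 / 2 : k) * ψ w) (a * b),
        Algebra.commutes ((1 / 2 : k) * ψ w) (algebraMap k (CliffordAlgebra Q) ((1 / 2 : k) * φ v))]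
      abel
    rw [hcomm, e1, e2]
    have hs : φ w • (algebraMap k (CliffordAlgebra Q) ((1 / 2 : k) * ψ v))
        = ψ v • (algebraMap k (CliffordAlgebra Q) ((1 / 2 : k) * φ w)) := by
      rw [Algebra.smul_def, Algebra.smul_def, ← map_mul, ← map_mul]
      congr 1; ring
    rw [smul_sub, smul_sub, hs]
    abel
  -- bilinear extension
  intro f g
  simp only [LinearMap.zero_apply, map_zero, add_zero]
  obtain ⟨t, rfl⟩ := e.surjective f
  obtain ⟨s, rfl⟩ := e.surjective g
  induction t using TensorProduct.induction_on with
  | zero => simp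
  | tmul φ v =>
    induction s using TensorProduct.induction_on with
    | zero => simp
    | tmul ψ w => rw [he, he]; exact key v w φ ψ
    | add s1 s2 h1 h2 =>
      calc Φ (e (φ ⊗ₜ[k] v)) * Φ (e (s1 + s2)) - Φ (e (s1 + s2)) * Φ (e (φ ⊗ₜ[k] v))
          = (Φ (e (φ ⊗ₜ[k] v)) * Φ (e s1) - Φ (e s1) * Φ (e (φ ⊗ₜ[k] v)))
            + (Φ (e (φ ⊗ₜ[k] v)) * Φ (e s2) - Φ (e s2) * Φ (e (φ ⊗ₜ[k] v))) := by
            rw [map_add, map_add]; noncomm_ring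
        _ = Φ ((e (φ ⊗ₜ[k] v)) ∘ₗ (e s1) - (e s1) ∘ₗ (e (φ ⊗ₜ[k] v)))
            + Φ ((e (φ ⊗ₜ[k] v)) ∘ₗ (e s2) - (e s2) ∘ₗ (e (φ ⊗ₜ[k] v))) := by
            rw [h1, h2]
        _ = Φ ((e (φ ⊗ₜ[k] v)) ∘ₗ (e (s1 + s2)) - (e (s1 + s2)) ∘ₗ (e (φ ⊗ₜ[k] v))) := by
            rw [← map_add]; congr 1; rw [map_add]; ext x; simp; abel
  | add t1 t2 h1 h2 =>
    calc Φ (e (t1 + t2)) * Φ (e s) - Φ (e s) * Φ (e (t1 + t2))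
        = (Φ (e t1) * Φ (e s) - Φ (e s) * Φ (e t1))
          + (Φ (e t2) * Φ (e s) - Φ (e s) * Φ (e t2)) := by
          rw [map_add, map_add]; noncomm_ring
      _ = Φ ((e t1) ∘ₗ (e s) - (e s) ∘ₗ (e t1)) + Φ ((e t2) ∘ₗ (e s) - (e s) ∘ₗ (e t2)) := by
          rw [h1, h2]
      _ = Φ ((e (t1 + t2)) ∘ₗ (e s) - (e s) ∘ₗ (e (t1 + t2))) := by
          rw [← map_add]; congr 1; rw [map_add]; ext x; simp; abel
end
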